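/- arXiv:1110.0699 — 2 statements merged into one kernel-verified Lean document; each statement's English description precedes it below -/
import Mathlib

section
/- Let α be a continuous action of a countable sofic group G on a compact metrizable space X, let Σ be a sofic approximation sequence for G, let ρ be a compatible metric on X, and let f : X → ℝ be continuous. Then for every G-invariant Borel probability measure μ on X, P_{Σ,∞}(f,X,G,ρ) ≥ h_{Σ,μ,∞}(ρ) + ∫_X f dμ. -/
open Filter MeasureTheory
open scoped Pointwise Classical BigOperators

namespace Sofic

structure ContAction (G : Type*) [Group G] (X : Type*) [TopologicalSpace X]
    (α : G → X → X) : Prop where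
  one : ∀ x, α 1 x = x
  mul : ∀ s t x, α (s * t) x = α s (α t x)
  cont : ∀ s, Continuous (α s)

structure IsContPseudoMetric (X : Type*) [TopologicalSpace X] (ρ : X → X → ℝ) : Prop where
  nonneg : ∀ x y, 0 ≤ ρ x y
  refl : ∀ x, ρ x x = 0
  symm : ∀ x y, ρ x y = ρ y x
  triangle : ∀ x y z, ρ x z ≤ ρ x y + ρ y z
  cont : Continuous fun p : X × X => ρ p.1 p.2

structure IsCompatMetric (X : Type*) [TopologicalSpace X] (ρ : X → X → ℝ)
    extends IsContPseudoMetric X ρ : Prop where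
  eq_of_zero : ∀ x y, ρ x y = 0 → x = y
  ball_mem : ∀ x : X, ∀ U ∈ nhds x, ∃ ε > 0, {y | ρ x y < ε} ⊆ U

structure IsSoficApprox (G : Type*) [Group G] (d : ℕ → ℕ)
    (σ : ∀ i, G → Equiv.Perm (Fin (d i))) : Prop where
  mul : ∀ s t : G, Tendsto
    (fun i => ((Finset.univ.filter fun a : Fin (d i) => σ i s (σ i t a) = σ i (s * t) a).card : ℝ) / (d i : ℝ))
    atTop (nhds 1)
  sep : ∀ s t : G, s ≠ t → Tendsto
    (fun i => ((Finset.univ.filter fun a : Fin (d i) => σ i s a ≠ σ i t a).card : ℝ) / (d i : ℝ))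
    atTop (nhds 1)
  dim_top : Tendsto d atTop atTop

noncomputable def rho2 {X : Type*} (ρ : X → X → ℝ) {d : ℕ} (φ ψ : Fin d → X) : ℝ :=
  Real.sqrt ((1 / (d : ℝ)) * ∑ a, (ρ (φ a) (ψ a)) ^ 2)

noncomputable def rhoInf {X : Type*} (ρ : X → X → ℝ) {d : ℕ} (φ ψ : Fin d → X) : ℝ :=
  ⨆ a : Fin d, ρ (φ a) (ψ a)

def MapSet {G X : Type*} [Group G] (α : G → X → X) (ρ : X → X → ℝ)
    (F : Finset G) (δ : ℝ) {d : ℕ} (σ : G → Equiv.Perm (Fin d)) : Set (Fin d → X) :=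
  {φ | ∀ s ∈ F, rho2 ρ (fun a => α s (φ a)) (fun a => φ (σ s a)) < δ}

noncomputable def Mval {G X : Type*} [Group G] (α : G → X → X) (f : X → ℝ) (ρ : X → X → ℝ)
    (ε : ℝ) (F : Finset G) (δ : ℝ) {d : ℕ} (σ : G → Equiv.Perm (Fin d))
    (sepd : (Fin d → X) → (Fin d → X) → ℝ) : ℝ :=
  sSup {r : ℝ | ∃ E : Finset (Fin d → X), ↑E ⊆ MapSet α ρ F δ σ ∧
    (∀ φ ∈ E, ∀ ψ ∈ E, φ ≠ ψ → ε ≤ sepd φ ψ) ∧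
    r = ∑ φ ∈ E, Real.exp (∑ a, f (φ a))}

noncomputable def PressureInf {G X : Type*} [Group G] (α : G → X → X) (f : X → ℝ)
    (ρ : X → X → ℝ) (d : ℕ → ℕ) (σ : ∀ i, G → Equiv.Perm (Fin (d i))) : EReal :=
  ⨆ (ε : ℝ) (_ : 0 < ε), ⨅ (F : Finset G) (_ : F.Nonempty), ⨅ (δ : ℝ) (_ : 0 < δ),
    Filter.limsup (fun i =>
      if (MapSet α ρ F δ (σ i)).Nonempty then
        (((Real.log (Mval α f ρ ε F δ (σ i) (rhoInf ρ))) / (d i : ℝ) : ℝ) : EReal)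
      else (⊥ : EReal)) atTop

noncomputable def Pressure2 {G X : Type*} [Group G] (α : G → X → X) (f : X → ℝ)
    (ρ : X → X → ℝ) (d : ℕ → ℕ) (σ : ∀ i, G → Equiv.Perm (Fin (d i))) : EReal :=
  ⨆ (ε : ℝ) (_ : 0 < ε), ⨅ (F : Finset G) (_ : F.Nonempty), ⨅ (δ : ℝ) (_ : 0 < δ),
    Filter.limsup (fun i =>
      if (MapSet α ρ F δ (σ i)).Nonempty then
        (((Real.log (Mval α f ρ ε F δ (σ i) (rho2 ρ))) / (d i : ℝ) : ℝ) : EReal)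
      else (⊥ : EReal)) atTop

def MapMuSet {G X : Type*} [Group G] [TopologicalSpace X] [MeasurableSpace X]
    (α : G → X → X) (μ : Measure X) (ρ : X → X → ℝ) (F : Finset G)
    (L : Finset C(X, ℝ)) (δ : ℝ) {d : ℕ} (σ : G → Equiv.Perm (Fin d)) : Set (Fin d → X) :=
  {φ | φ ∈ MapSet α ρ F δ σ ∧
    ∀ g ∈ L, |(1 / (d : ℝ)) * ∑ j, g (φ j) - ∫ x, g x ∂μ| < δ}

noncomputable def Nval {X : Type*} (ε : ℝ) {d : ℕ} (Y : Set (Fin d → X))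
    (sepd : (Fin d → X) → (Fin d → X) → ℝ) : ℝ :=
  sSup {r : ℝ | ∃ E : Finset (Fin d → X), ↑E ⊆ Y ∧
    (∀ φ ∈ E, ∀ ψ ∈ E, φ ≠ ψ → ε ≤ sepd φ ψ) ∧ r = (E.card : ℝ)}

noncomputable def MeasEntropy {G X : Type*} [Group G] [TopologicalSpace X] [MeasurableSpace X]
    (α : G → X → X) (μ : Measure X) (ρ : X → X → ℝ) (d : ℕ → ℕ)
    (σ : ∀ i, G → Equiv.Perm (Fin (d i))) : EReal :=
  ⨆ (ε : ℝ) (_ : 0 < ε), ⨅ (F : Finset G) (_ : F.Nonempty),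
    ⨅ (L : Finset C(X, ℝ)) (_ : L.Nonempty), ⨅ (δ : ℝ) (_ : 0 < δ),
      Filter.limsup (fun i =>
        if (MapMuSet α μ ρ F L δ (σ i)).Nonempty then
          (((Real.log (Nval ε (MapMuSet α μ ρ F L δ (σ i)) (rhoInf ρ))) / (d i : ℝ) : ℝ) : EReal)
        else (⊥ : EReal)) atTop

def IsInvProb {G X : Type*} [Group G] [MeasurableSpace X]
    (α : G → X → X) (μ : Measure X) : Prop :=
  IsProbabilityMeasure μ ∧ ∀ s : G, Measure.map (α s) μ = μ

noncomputable def Kval {G X : Type*} [Group G] (α : G → X → X) (f : X → ℝ)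
    (ρ : X → X → ℝ) (ε : ℝ) (F : Finset G) : ℝ :=
  sSup {r : ℝ | ∃ D : Finset X,
    (∀ x ∈ D, ∀ y ∈ D, x ≠ y → ε ≤ ⨆ s ∈ F, ρ (α s x) (α s y)) ∧
    r = ∑ x ∈ D, Real.exp (∑ s ∈ F, f (α s x))}

def IsFolnerSeq (G : Type*) [Group G] [DecidableEq G] (Fol : ℕ → Finset G) : Prop :=
  (∀ n, (Fol n).Nonempty) ∧ ∀ s : G,
    Tendsto (fun n =>
      (((((Fol n).image fun t => s * t) \ Fol n) ∪ (Fol n \ ((Fol n).image fun t => s * t))).card : ℝ)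
        / ((Fol n).card : ℝ)) atTop (nhds 0)

/-! Fix `ε`, `F` and `δ`, and test the entropy against `L = {f}` with tolerance `t ≤ δ`. Every
such microstate `φ : Fin d → X` satisfies `∑ a, f (φ a) > d (∫ f dμ - t)`, so an `ε`-separated
family of `N` of them contributes at least `N exp (d (∫ f dμ - t))` to the pressure sum.
Taking logarithms, dividing by `d`, passing to the `limsup` and letting `t → 0` gives the
inequality. Compactness of `X` keeps every `sSup` involved finite, so none of them takes its
junk value. -/

theorem biSup_add_le_biSup {ι : Type*} {p : ι → Prop} {A B : ι → EReal} {c : EReal}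
    (h : ∀ i, p i → A i + c ≤ B i) :
    (⨆ (i) (_ : p i), A i) + c ≤ ⨆ (i) (_ : p i), B i :=
  EReal.add_le_of_forall_lt fun a ha b hb => by
    obtain ⟨i, hi, hai⟩ := lt_biSup_iff.1 ha
    exact (add_le_add hai.le hb.le).trans ((h i hi).trans (le_biSup B hi))

theorem add_coe_le_of_forall_add_coe_sub_le {a b : EReal} {c δ : ℝ} (hδ : 0 < δ)
    (h : ∀ t : ℝ, 0 < t → t ≤ δ → a + ((c - t : ℝ) : EReal) ≤ b) :
    a + c ≤ b :=
  EReal.add_le_of_forall_lt fun a' ha' b' hb' => by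
    induction b' using EReal.rec with
    | bot => simp
    | top => exact absurd hb' (not_lt.2 le_top)
    | coe r =>
      have hr : r < c := EReal.coe_lt_coe_iff.1 hb'
      calc a' + r ≤ a + ((c - min (c - r) δ : ℝ) : EReal) :=
            add_le_add ha'.le (EReal.coe_le_coe_iff.2 (by linarith [min_le_left (c - r) δ]))
        _ ≤ b := h _ (lt_min (by linarith) hδ) (min_le_right _ _)

theorem limsup_add_coe_le {ι : Type*} {l : Filter ι} [l.NeBot] {u w : ι → EReal} {c : ℝ}
    (h : ∀ᶠ i in l, u i + c ≤ w i) :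
    limsup u l + c ≤ limsup w l :=
  calc limsup u l + c = limsup u l + liminf (fun _ => (c : EReal)) l := by rw [liminf_const]
    _ ≤ limsup (u + fun _ => (c : EReal)) l := EReal.le_limsup_add
    _ ≤ limsup w l := limsup_le_limsup h

theorem rhoInf_le {X : Type*} {ρ : X → X → ℝ} {d : ℕ} {φ ψ : Fin d → X} {r : ℝ} (hr : 0 ≤ r)
    (h : ∀ a, ρ (φ a) (ψ a) ≤ r) : rhoInf ρ φ ψ ≤ r :=
  Real.iSup_le h hr

theorem Nval_le {X : Type*} {ε B : ℝ} {d : ℕ} {Y : Set (Fin d → X)}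
    {sepd : (Fin d → X) → (Fin d → X) → ℝ}
    (h : ∀ E : Finset (Fin d → X), ↑E ⊆ Y → (E : Set (Fin d → X)).Pairwise (ε ≤ sepd · ·) →
      (E.card : ℝ) ≤ B) :
    Nval ε Y sepd ≤ B :=
  csSup_le ⟨0, ∅, by simp, by simp, by simp⟩ fun _ ⟨E, hEY, hE, hr⟩ => hr ▸ h E hEY hE

theorem MapMuSet_subset_MapSet {G X : Type*} [Group G] [TopologicalSpace X] [MeasurableSpace X]
    {α : G → X → X} {μ : Measure X} {ρ : X → X → ℝ} {F : Finset G} {L : Finset C(X, ℝ)}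
    {δ₁ δ₂ : ℝ} {d : ℕ} {σ : G → Equiv.Perm (Fin d)} (hδ : δ₁ ≤ δ₂) :
    MapMuSet α μ ρ F L δ₁ σ ⊆ MapSet α ρ F δ₂ σ :=
  fun _ hφ s hs => (hφ.1 s hs).trans_le hδ

theorem mul_sub_lt_sum_of_mem_MapMuSet {G X : Type*} [Group G] [TopologicalSpace X]
    [MeasurableSpace X] {α : G → X → X} {μ : Measure X} {ρ : X → X → ℝ} {F : Finset G}
    {L : Finset C(X, ℝ)} {δ : ℝ} {d : ℕ} {σ : G → Equiv.Perm (Fin d)} {φ : Fin d → X}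
    {g : C(X, ℝ)} (hd : 0 < d) (hφ : φ ∈ MapMuSet α μ ρ F L δ σ) (hg : g ∈ L) :
    (d : ℝ) * (∫ x, g x ∂μ - δ) < ∑ a, g (φ a) := by
  have hd' : (0 : ℝ) < d := by exact_mod_cast hd
  have h := mul_lt_mul_of_pos_left (abs_lt.1 (hφ.2 g hg)).1 hd'
  rw [mul_sub, ← mul_assoc, mul_one_div_cancel hd'.ne', one_mul] at h
  linarith

section Separated

variable {X : Type*} [TopologicalSpace X] [CompactSpace X] {ρ : X → X → ℝ}

theorem IsContPseudoMetric.exists_finset_lt (hρ : IsContPseudoMetric X ρ) {r : ℝ} (hr : 0 < r) :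
    ∃ T : Finset X, ∀ x, ∃ c ∈ T, ρ c x < r := by
  have hopen (c : X) : IsOpen {y | ρ c y < r} :=
    isOpen_lt (hρ.cont.comp (Continuous.prodMk continuous_const continuous_id)) continuous_const
  obtain ⟨T, hT⟩ := isCompact_univ.elim_finite_subcover _ hopen
    fun x _ => Set.mem_iUnion.2 ⟨x, by simpa [hρ.refl] using hr⟩
  exact ⟨T, fun x => by simpa using hT (Set.mem_univ x)⟩

/-- Sending each coordinate to a centre of an `ε / 4`-net injects `ε`-separated maps into `T ^ d`. -/
theorem IsContPseudoMetric.exists_card_le_pow (hρ : IsContPseudoMetric X ρ) {ε : ℝ}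
    (hε : 0 < ε) :
    ∃ N : ℕ, ∀ {d : ℕ} (E : Finset (Fin d → X)),
      (E : Set (Fin d → X)).Pairwise (ε ≤ rhoInf ρ · ·) → E.card ≤ N ^ d := by
  obtain ⟨T, hT⟩ := hρ.exists_finset_lt (by positivity : 0 < ε / 4)
  choose c hcT hc using hT
  refine ⟨T.card, fun {d} E hE => ?_⟩
  have hinj : Set.InjOn (fun (φ : Fin d → X) a => (⟨c (φ a), hcT _⟩ : T)) E := by
    intro φ hφ ψ hψ h
    by_contra hne
    have hclose : rhoInf ρ φ ψ ≤ ε / 2 := rhoInf_le (by positivity) fun a => by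
      have hca : c (φ a) = c (ψ a) := congrArg Subtype.val (congrFun h a)
      have htri := hρ.triangle (φ a) (c (φ a)) (ψ a)
      rw [hρ.symm (φ a) (c (φ a)), hca] at htri
      linarith [hc (ψ a), hca ▸ hc (φ a)]
    linarith [hE hφ hψ hne]
  simpa using Finset.card_le_card_of_injOn _ (fun _ _ => Finset.mem_univ _) hinj


theorem IsContPseudoMetric.card_le_Nval (hρ : IsContPseudoMetric X ρ) {ε : ℝ} (hε : 0 < ε)
    {d : ℕ} {Y : Set (Fin d → X)} {E : Finset (Fin d → X)} (hEY : ↑E ⊆ Y)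
    (hE : (E : Set (Fin d → X)).Pairwise (ε ≤ rhoInf ρ · ·)) :
    (E.card : ℝ) ≤ Nval ε Y (rhoInf ρ) := by
  obtain ⟨N, hN⟩ := hρ.exists_card_le_pow hε
  refine le_csSup ⟨N ^ d, ?_⟩ ⟨E, hEY, hE, rfl⟩
  rintro _ ⟨E', -, hE', rfl⟩
  exact_mod_cast hN E' hE'

theorem IsContPseudoMetric.one_le_Nval (hρ : IsContPseudoMetric X ρ) {ε : ℝ} (hε : 0 < ε)
    {d : ℕ} {Y : Set (Fin d → X)} (hY : Y.Nonempty) :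
    1 ≤ Nval ε Y (rhoInf ρ) := by
  obtain ⟨φ, hφ⟩ := hY
  simpa using hρ.card_le_Nval hε (E := {φ}) (by simpa using hφ) (by simp)

variable {G : Type*} [Group G] {α : G → X → X} {f : X → ℝ} {F : Finset G} {ε δ : ℝ} {d : ℕ}
  {σ : G → Equiv.Perm (Fin d)}

theorem IsContPseudoMetric.sum_exp_le_Mval (hρ : IsContPseudoMetric X ρ) (hf : Continuous f)
    (hε : 0 < ε) {E : Finset (Fin d → X)} (hEM : ↑E ⊆ MapSet α ρ F δ σ)
    (hE : (E : Set (Fin d → X)).Pairwise (ε ≤ rhoInf ρ · ·)) :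
    ∑ φ ∈ E, Real.exp (∑ a, f (φ a)) ≤ Mval α f ρ ε F δ σ (rhoInf ρ) := by
  obtain ⟨N, hN⟩ := hρ.exists_card_le_pow hε
  obtain ⟨C, hC⟩ := (isCompact_range hf).bddAbove
  refine le_csSup ⟨N ^ d * Real.exp (d * C), ?_⟩ ⟨E, hEM, hE, rfl⟩
  rintro _ ⟨E', -, hE', rfl⟩
  have hsum (φ : Fin d → X) : ∑ a, f (φ a) ≤ d * C := by
    simpa using Finset.sum_le_sum fun a (_ : a ∈ Finset.univ) => hC (Set.mem_range_self (φ a))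
  calc ∑ φ ∈ E', Real.exp (∑ a, f (φ a)) ≤ ∑ _φ ∈ E', Real.exp (d * C) :=
        Finset.sum_le_sum fun φ _ => Real.exp_le_exp.2 (hsum φ)
    _ = E'.card * Real.exp (d * C) := by simp
    _ ≤ N ^ d * Real.exp (d * C) := by gcongr; exact_mod_cast hN E' hE'

theorem IsContPseudoMetric.Nval_mul_exp_le_Mval (hρ : IsContPseudoMetric X ρ) (hf : Continuous f)
    (hε : 0 < ε) {Y : Set (Fin d → X)} (hY : Y ⊆ MapSet α ρ F δ σ) {c : ℝ}
    (hc : ∀ φ ∈ Y, c ≤ ∑ a, f (φ a)) :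
    Nval ε Y (rhoInf ρ) * Real.exp c ≤ Mval α f ρ ε F δ σ (rhoInf ρ) := by
  rw [← le_div_iff₀ (Real.exp_pos c)]
  refine Nval_le fun E hEY hE => (le_div_iff₀ (Real.exp_pos c)).2 ?_
  calc (E.card : ℝ) * Real.exp c = ∑ _φ ∈ E, Real.exp c := by simp
    _ ≤ ∑ φ ∈ E, Real.exp (∑ a, f (φ a)) :=
        Finset.sum_le_sum fun φ hφ => Real.exp_le_exp.2 (hc φ (hEY hφ))
    _ ≤ Mval α f ρ ε F δ σ (rhoInf ρ) := hρ.sum_exp_le_Mval hf hε (hEY.trans hY) hE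

theorem IsContPseudoMetric.log_Nval_add_le_log_Mval (hρ : IsContPseudoMetric X ρ)
    (hf : Continuous f) (hε : 0 < ε) {Y : Set (Fin d → X)} (hYne : Y.Nonempty)
    (hY : Y ⊆ MapSet α ρ F δ σ) {c : ℝ} (hc : ∀ φ ∈ Y, c ≤ ∑ a, f (φ a)) :
    Real.log (Nval ε Y (rhoInf ρ)) + c ≤ Real.log (Mval α f ρ ε F δ σ (rhoInf ρ)) := by
  have hN : 0 < Nval ε Y (rhoInf ρ) := one_pos.trans_le (hρ.one_le_Nval hε hYne)
  calc Real.log (Nval ε Y (rhoInf ρ)) + c = Real.log (Nval ε Y (rhoInf ρ) * Real.exp c) := by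
        rw [Real.log_mul hN.ne' (Real.exp_pos c).ne', Real.log_exp]
    _ ≤ Real.log (Mval α f ρ ε F δ σ (rhoInf ρ)) :=
        Real.log_le_log (by positivity) (hρ.Nval_mul_exp_le_Mval hf hε hY hc)

end Separated

section Approximants

variable {G X : Type*} [Group G] [TopologicalSpace X] [MeasurableSpace X]

-- `MeasEntropy` and `PressureInf` are, definitionally, `⨆ ⨅ limsup` of these terms along `σ i`.
noncomputable def entropyApprox (α : G → X → X) (μ : Measure X) (ρ : X → X → ℝ) (ε : ℝ)
    (F : Finset G) (L : Finset C(X, ℝ)) (δ : ℝ) {d : ℕ} (σ : G → Equiv.Perm (Fin d)) : EReal :=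
  if (MapMuSet α μ ρ F L δ σ).Nonempty then
    ((Real.log (Nval ε (MapMuSet α μ ρ F L δ σ) (rhoInf ρ)) / d : ℝ) : EReal)
  else ⊥

noncomputable def pressureApprox (α : G → X → X) (f : X → ℝ) (ρ : X → X → ℝ) (ε : ℝ)
    (F : Finset G) (δ : ℝ) {d : ℕ} (σ : G → Equiv.Perm (Fin d)) : EReal :=
  if (MapSet α ρ F δ σ).Nonempty then
    ((Real.log (Mval α f ρ ε F δ σ (rhoInf ρ)) / d : ℝ) : EReal)
  else ⊥

theorem entropyApprox_add_le_pressureApprox [CompactSpace X] {α : G → X → X} {μ : Measure X}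
    {f : X → ℝ} {ρ : X → X → ℝ} (hρ : IsContPseudoMetric X ρ) (hf : Continuous f) {ε t δ : ℝ}
    (hε : 0 < ε) (htδ : t ≤ δ) (F : Finset G) {d : ℕ} (hd : 0 < d)
    (σ : G → Equiv.Perm (Fin d)) :
    entropyApprox α μ ρ ε F {⟨f, hf⟩} t σ + ((∫ x, f x ∂μ - t : ℝ) : EReal)
      ≤ pressureApprox α f ρ ε F δ σ := by
  have hsub : MapMuSet α μ ρ F {⟨f, hf⟩} t σ ⊆ MapSet α ρ F δ σ := MapMuSet_subset_MapSet htδ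
  unfold entropyApprox pressureApprox
  split_ifs with hY hM
  · have hd' : (0 : ℝ) < d := by exact_mod_cast hd
    have key := hρ.log_Nval_add_le_log_Mval hf hε hY hsub fun φ hφ =>
      (mul_sub_lt_sum_of_mem_MapMuSet hd hφ (Finset.mem_singleton_self _)).le
    rw [← EReal.coe_add, EReal.coe_le_coe_iff, div_add' _ _ _ hd'.ne',
      div_le_div_iff_of_pos_right hd']
    simpa [mul_comm] using key
  · exact absurd (hY.mono hsub) hM
  all_goals simp

end Approximants

theorem stmt2_general {G : Type*} [Group G]
    {X : Type*} [TopologicalSpace X] [CompactSpace X]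
    [MeasurableSpace X]
    (α : G → X → X)
    (d : ℕ → ℕ) (σ : ∀ i, G → Equiv.Perm (Fin (d i))) (hσ : IsSoficApprox G d σ)
    (f : X → ℝ) (hf : Continuous f)
    (ρ : X → X → ℝ) (hρ : IsCompatMetric X ρ)
    (μ : Measure X) :
    MeasEntropy α μ ρ d σ + (((∫ x, f x ∂μ) : ℝ) : EReal) ≤ PressureInf α f ρ d σ := by
  refine biSup_add_le_biSup fun ε hε => le_iInf₂ fun F hF => le_iInf₂ fun δ hδ => ?_
  refine add_coe_le_of_forall_add_coe_sub_le hδ fun t ht htδ => ?_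
  calc _ ≤ limsup (fun i => entropyApprox α μ ρ ε F {⟨f, hf⟩} t (σ i)) atTop
          + ((∫ x, f x ∂μ - t : ℝ) : EReal) := by
        gcongr
        exact iInf₂_le_of_le F hF <| iInf₂_le_of_le _ (Finset.singleton_nonempty _) <|
          iInf₂_le t ht
    _ ≤ _ := limsup_add_coe_le <| (hσ.dim_top.eventually_gt_atTop 0).mono fun i hi =>
        entropyApprox_add_le_pressureApprox hρ.toIsContPseudoMetric hf hε htδ F hi (σ i)

theorem stmt2 {G : Type*} [Group G] [Countable G]
    {X : Type*} [TopologicalSpace X] [CompactSpace X] [TopologicalSpace.MetrizableSpace X]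
    [MeasurableSpace X] [BorelSpace X]
    (α : G → X → X) (hα : ContAction G X α)
    (d : ℕ → ℕ) (σ : ∀ i, G → Equiv.Perm (Fin (d i))) (hσ : IsSoficApprox G d σ)
    (f : X → ℝ) (hf : Continuous f)
    (ρ : X → X → ℝ) (hρ : IsCompatMetric X ρ)
    (μ : Measure X) (hμ : IsInvProb α μ) :
    MeasEntropy α μ ρ d σ + (((∫ x, f x ∂μ) : ℝ) : EReal) ≤ PressureInf α f ρ d σ :=
  stmt2_general α d σ hσ f hf ρ hρ μ

end Sofic
end

section
/- Let α be a continuous action of a countable sofic group G on a compact metrizable space X with sofic approximation sequence Σ, and let f : X → ℝ be continuous. Then for any two compatible metrics ρ and ρ' on X (metrics inducing the topology of X), P_{Σ,∞}(f,X,G,ρ) = P_{Σ,∞}(f,X,G,ρ'). -/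
/-!
On a compact space any two compatible metrics are uniformly equivalent. Hence a family that is
`ε`-separated for `ρ_∞` is `η`-separated for `ρ'_∞` for some `η > 0`, and, `ρ'` being bounded,
a small `ρ_2`-distance forces a small `ρ'_2`-distance, so `Map(ρ, F, δ, σ) ⊆ Map(ρ', F, δ', σ)`
once `δ` is small. Every quantity entering `P_{Σ,∞}(f, X, G, ρ)` is thus dominated by one entering
`P_{Σ,∞}(f, X, G, ρ')`, and symmetry gives equality. The suprema `M^ε` are finite (and positive
when `Map` is nonempty) because separated families are coded injectively through a finite
`ε/2`-net.
-/

open Filter MeasureTheory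
open scoped Pointwise Classical BigOperators

namespace Sofic

section PseudoDistances

variable {X : Type*} {ρ ρ' : X → X → ℝ} {d : ℕ} {φ ψ : Fin d → X}

theorem le_rhoInf (ρ : X → X → ℝ) (φ ψ : Fin d → X) (a : Fin d) :
    ρ (φ a) (ψ a) ≤ rhoInf ρ φ ψ :=
  le_ciSup (f := fun a => ρ (φ a) (ψ a)) (Set.finite_range _).bddAbove a

theorem exists_le_of_le_rhoInf {ε : ℝ} (hε : 0 < ε) (h : ε ≤ rhoInf ρ φ ψ) :
    ∃ a, ε ≤ ρ (φ a) (ψ a) := by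
  cases isEmpty_or_nonempty (Fin d) with
  | inl _ =>
    -- for `d = 0` the supremum is the junk value `0`
    rw [rhoInf, Real.iSup_of_isEmpty] at h
    linarith
  | inr _ =>
    obtain ⟨a, ha⟩ := exists_eq_ciSup_of_finite (f := fun a => ρ (φ a) (ψ a))
    exact ⟨a, ha ▸ h⟩

theorem le_rhoInf_of_le_rhoInf {ε η : ℝ} (hε : 0 < ε) (himp : ∀ x y, ρ' x y < η → ρ x y < ε)
    (h : ε ≤ rhoInf ρ φ ψ) : η ≤ rhoInf ρ' φ ψ := by
  obtain ⟨a, ha⟩ := exists_le_of_le_rhoInf hε h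
  exact (not_lt.1 fun hlt => (himp _ _ hlt).not_ge ha).trans (le_rhoInf ρ' φ ψ a)

theorem rho2_nonneg : 0 ≤ rho2 ρ φ ψ :=
  Real.sqrt_nonneg _

theorem rho2_sq : rho2 ρ φ ψ ^ 2 = (1 / (d : ℝ)) * ∑ a, ρ (φ a) (ψ a) ^ 2 :=
  Real.sq_sqrt (by positivity)

theorem rho2_sq_le {A B : ℝ} (hA : 0 ≤ A)
    (h : ∀ x y, ρ' x y ^ 2 ≤ A + B * ρ x y ^ 2) :
    rho2 ρ' φ ψ ^ 2 ≤ A + B * rho2 ρ φ ψ ^ 2 := by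
  rw [rho2_sq, rho2_sq]
  calc (1 / (d : ℝ)) * ∑ a, ρ' (φ a) (ψ a) ^ 2
      ≤ (1 / (d : ℝ)) * ∑ a, (A + B * ρ (φ a) (ψ a) ^ 2) := by
        gcongr with a
        exact h _ _
    _ = (d / d : ℝ) * A + B * ((1 / (d : ℝ)) * ∑ a, ρ (φ a) (ψ a) ^ 2) := by
        rw [Finset.sum_add_distrib, ← Finset.mul_sum, Finset.sum_const, Finset.card_univ,
          Fintype.card_fin, nsmul_eq_mul]
        ring
    _ ≤ A + B * ((1 / (d : ℝ)) * ∑ a, ρ (φ a) (ψ a) ^ 2) := by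
        gcongr
        exact mul_le_of_le_one_left hA (div_self_le_one _)

end PseudoDistances

section CompactSpace

variable {X : Type*} [TopologicalSpace X] [CompactSpace X] {ρ ρ' : X → X → ℝ}

theorem exists_pos_forall_lt_imp_lt (hρ : IsContPseudoMetric X ρ) (hρ' : IsCompatMetric X ρ')
    {ε : ℝ} (hε : 0 < ε) : ∃ η > 0, ∀ x y, ρ' x y < η → ρ x y < ε := by
  set K : Set (X × X) := {p | ε ≤ ρ p.1 p.2}
  rcases K.eq_empty_or_nonempty with hK | hK
  · exact ⟨1, one_pos, fun x y _ => not_le.1 fun hxy =>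
      (Set.eq_empty_iff_forall_notMem.1 hK) (x, y) hxy⟩
  -- `ρ'` attains a minimum on the compact set `K`, and `K` misses the diagonal
  obtain ⟨p, hpK, hpmin⟩ :=
    (isClosed_le continuous_const hρ.cont).isCompact.exists_isMinOn hK hρ'.cont.continuousOn
  have hp : 0 < ρ' p.1 p.2 := by
    refine (hρ'.nonneg _ _).lt_of_ne fun h => ?_
    have hpK : ε ≤ ρ p.1 p.2 := hpK
    rw [hρ'.eq_of_zero _ _ h.symm, hρ.refl] at hpK
    linarith
  exact ⟨_, hp, fun x y hxy => not_le.1 fun h => (hpmin (show (x, y) ∈ K from h)).not_gt hxy⟩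

theorem exists_rho2_lt (hρ : IsCompatMetric X ρ) (hρ' : IsContPseudoMetric X ρ')
    {δ' : ℝ} (hδ' : 0 < δ') :
    ∃ δ > 0, ∀ {d : ℕ} (φ ψ : Fin d → X), rho2 ρ φ ψ < δ → rho2 ρ' φ ψ < δ' := by
  obtain ⟨M, hM, hρ'M⟩ : ∃ M > 0, ∀ x y, ρ' x y ≤ M := by
    obtain ⟨M, hM⟩ := (isCompact_range hρ'.cont).bddAbove
    exact ⟨max M 1, by positivity, fun x y => (hM ⟨(x, y), rfl⟩).trans (le_max_left _ _)⟩
  obtain ⟨η, hη, himp⟩ := exists_pos_forall_lt_imp_lt hρ' hρ (half_pos hδ')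
  set θ := δ' / 2
  set K := M / η
  -- `ρ' < θ` where `ρ < η`, and `ρ' ≤ M ≤ K ρ` elsewhere
  have hpt : ∀ x y, ρ' x y ^ 2 ≤ θ ^ 2 + K ^ 2 * ρ x y ^ 2 := by
    intro x y
    rcases lt_or_ge (ρ x y) η with h | h
    · have h' := himp x y h
      nlinarith [hρ'.nonneg x y, sq_nonneg (K * ρ x y)]
    · have hMK : M ≤ K * ρ x y := by
        rw [div_mul_eq_mul_div, le_div_iff₀ hη]
        gcongr
      nlinarith [hρ'.nonneg x y, hρ'M x y, sq_nonneg θ]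
  refine ⟨θ / K, by positivity, fun φ ψ h => lt_of_pow_lt_pow_left₀ 2 hδ'.le ?_⟩
  calc rho2 ρ' φ ψ ^ 2 ≤ θ ^ 2 + K ^ 2 * rho2 ρ φ ψ ^ 2 := rho2_sq_le (sq_nonneg θ) hpt
    _ < θ ^ 2 + K ^ 2 * (θ / K) ^ 2 := by
        have : 0 < K := by positivity
        gcongr
        exact rho2_nonneg
    _ = δ' ^ 2 / 2 := by
        have : K ≠ 0 := by positivity
        field_simp
        ring
    _ < δ' ^ 2 := by linarith [pow_pos hδ' 2]

theorem exists_mapSet_subset {G : Type*} [Group G] (α : G → X → X) (hρ : IsCompatMetric X ρ)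
    (hρ' : IsContPseudoMetric X ρ') (F : Finset G) {δ' : ℝ} (hδ' : 0 < δ') :
    ∃ δ > 0, ∀ {d : ℕ} (σ : G → Equiv.Perm (Fin d)), MapSet α ρ F δ σ ⊆ MapSet α ρ' F δ' σ := by
  obtain ⟨δ, hδ, h⟩ := exists_rho2_lt hρ hρ' hδ'
  exact ⟨δ, hδ, fun σ φ hφ s hs => h _ _ (hφ s hs)⟩

theorem exists_finset_forall_exists_lt (hρ : IsContPseudoMetric X ρ) {ε : ℝ} (hε : 0 < ε) :
    ∃ t : Finset X, ∀ y, ∃ x ∈ t, ρ x y < ε := by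
  obtain ⟨t, ht⟩ := isCompact_univ.elim_finite_subcover (fun x => {y | ρ x y < ε})
    (fun x => isOpen_lt (hρ.cont.comp (continuous_const.prodMk continuous_id)) continuous_const)
    (fun y _ => Set.mem_iUnion.2 ⟨y, by simpa [hρ.refl] using hε⟩)
  exact ⟨t, fun y => by simpa using ht (Set.mem_univ y)⟩

theorem exists_card_le_of_rhoInf_separated (hρ : IsContPseudoMetric X ρ) {ε : ℝ} (hε : 0 < ε)
    (d : ℕ) : ∃ N : ℕ, ∀ E : Finset (Fin d → X),
      (∀ φ ∈ E, ∀ ψ ∈ E, φ ≠ ψ → ε ≤ rhoInf ρ φ ψ) → E.card ≤ N := by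
  obtain ⟨t, ht⟩ := exists_finset_forall_exists_lt hρ (half_pos hε)
  choose c hct hc using ht
  -- coding `φ` by the centres `c ∘ φ` of an `ε/2`-net is injective on a separated family
  refine ⟨(Fintype.piFinset fun _ : Fin d => t).card, fun E hE =>
    Finset.card_le_card_of_injOn (fun φ => c ∘ φ)
      (fun φ _ => Fintype.mem_piFinset.2 fun a => hct _) fun φ hφ ψ hψ hcode => ?_⟩
  by_contra hne
  obtain ⟨a, ha⟩ := exists_le_of_le_rhoInf hε (hE φ hφ ψ hψ hne)
  have hca : c (φ a) = c (ψ a) := congrFun hcode a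
  have hφa := hc (φ a)
  have htri := hρ.triangle (φ a) (c (φ a)) (ψ a)
  rw [hρ.symm (φ a) (c (φ a))] at htri
  rw [hca] at htri hφa
  linarith [hc (ψ a)]

variable {G : Type*} [Group G] (α : G → X → X) {f : X → ℝ}

theorem bddAbove_mval_set (hf : Continuous f) (ρ₀ : X → X → ℝ) (hρ : IsContPseudoMetric X ρ)
    {ε : ℝ} (hε : 0 < ε) (F : Finset G) (δ : ℝ) {d : ℕ} (σ : G → Equiv.Perm (Fin d)) :
    BddAbove {r : ℝ | ∃ E : Finset (Fin d → X), ↑E ⊆ MapSet α ρ₀ F δ σ ∧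
      (∀ φ ∈ E, ∀ ψ ∈ E, φ ≠ ψ → ε ≤ rhoInf ρ φ ψ) ∧
      r = ∑ φ ∈ E, Real.exp (∑ a, f (φ a))} := by
  obtain ⟨N, hN⟩ := exists_card_le_of_rhoInf_separated hρ hε d
  obtain ⟨C, hC⟩ := (isCompact_range hf).bddAbove
  refine ⟨N * Real.exp (d * C), ?_⟩
  rintro _ ⟨E, -, hE, rfl⟩
  have hterm : ∀ φ : Fin d → X, ∑ a, f (φ a) ≤ d * C := fun φ =>
    calc ∑ a, f (φ a) ≤ ∑ _a : Fin d, C := Finset.sum_le_sum fun a _ => hC ⟨φ a, rfl⟩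
      _ = d * C := by simp
  calc ∑ φ ∈ E, Real.exp (∑ a, f (φ a)) ≤ ∑ _φ ∈ E, Real.exp (d * C) := by
        gcongr with φ
        exact hterm φ
    _ = E.card * Real.exp (d * C) := by simp
    _ ≤ N * Real.exp (d * C) := by
        gcongr
        exact_mod_cast hN E hE

theorem mval_pos (hf : Continuous f) {ρ₀ : X → X → ℝ} (hρ : IsContPseudoMetric X ρ) {ε : ℝ}
    (hε : 0 < ε) {F : Finset G} {δ : ℝ} {d : ℕ} {σ : G → Equiv.Perm (Fin d)}
    (hne : (MapSet α ρ₀ F δ σ).Nonempty) : 0 < Mval α f ρ₀ ε F δ σ (rhoInf ρ) := by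
  obtain ⟨φ₀, hφ₀⟩ := hne
  refine (Real.exp_pos (∑ a, f (φ₀ a))).trans_le
    (le_csSup (bddAbove_mval_set α hf ρ₀ hρ hε F δ σ) ⟨{φ₀}, ?_, ?_, by simp⟩)
  · simpa using hφ₀
  · simp +contextual

theorem mval_mono (hf : Continuous f) {ρ₀ ρ₀' : X → X → ℝ} (hρ' : IsContPseudoMetric X ρ')
    {ε ε' : ℝ} (hε' : 0 < ε') {F : Finset G} {δ δ' : ℝ} {d : ℕ} {σ : G → Equiv.Perm (Fin d)}
    (hsub : MapSet α ρ₀ F δ σ ⊆ MapSet α ρ₀' F δ' σ)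
    (hsep : ∀ φ ψ : Fin d → X, ε ≤ rhoInf ρ φ ψ → ε' ≤ rhoInf ρ' φ ψ) :
    Mval α f ρ₀ ε F δ σ (rhoInf ρ) ≤ Mval α f ρ₀' ε' F δ' σ (rhoInf ρ') := by
  refine csSup_le_csSup (bddAbove_mval_set α hf ρ₀' hρ' hε' F δ' σ) ⟨0, ∅, by simp⟩ ?_
  rintro r ⟨E, hE, hEsep, rfl⟩
  exact ⟨E, hE.trans hsub, fun φ hφ ψ hψ hne => hsep φ ψ (hEsep φ hφ ψ hψ hne), rfl⟩

theorem pressureInf_term_mono (hf : Continuous f) (hρ : IsContPseudoMetric X ρ)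
    (hρ' : IsContPseudoMetric X ρ') {ε η : ℝ} (hε : 0 < ε) (hη : 0 < η) {F : Finset G}
    {δ δ' : ℝ} {d : ℕ} {σ : G → Equiv.Perm (Fin d)}
    (hsub : MapSet α ρ F δ σ ⊆ MapSet α ρ' F δ' σ)
    (hsep : ∀ φ ψ : Fin d → X, ε ≤ rhoInf ρ φ ψ → η ≤ rhoInf ρ' φ ψ) :
    (if (MapSet α ρ F δ σ).Nonempty then
        (((Real.log (Mval α f ρ ε F δ σ (rhoInf ρ))) / (d : ℝ) : ℝ) : EReal) else ⊥) ≤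
      if (MapSet α ρ' F δ' σ).Nonempty then
        (((Real.log (Mval α f ρ' η F δ' σ (rhoInf ρ'))) / (d : ℝ) : ℝ) : EReal) else ⊥ := by
  by_cases hne : (MapSet α ρ F δ σ).Nonempty
  · rw [if_pos hne, if_pos (hne.mono hsub), EReal.coe_le_coe_iff]
    gcongr
    · exact mval_pos α hf hρ hε hne
    · exact mval_mono α hf hρ' hη hsub hsep
  · rw [if_neg hne]
    exact bot_le

theorem pressureInf_le (hf : Continuous f) (hρ : IsCompatMetric X ρ) (hρ' : IsCompatMetric X ρ')
    (d : ℕ → ℕ) (σ : ∀ i, G → Equiv.Perm (Fin (d i))) :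
    PressureInf α f ρ d σ ≤ PressureInf α f ρ' d σ := by
  refine iSup₂_le fun ε hε => ?_
  obtain ⟨η, hη, himp⟩ := exists_pos_forall_lt_imp_lt hρ.toIsContPseudoMetric hρ' hε
  refine le_iSup₂_of_le η hη (le_iInf₂ fun F hF => le_iInf₂ fun δ' hδ' => ?_)
  obtain ⟨δ, hδ, hsub⟩ := exists_mapSet_subset α hρ hρ'.toIsContPseudoMetric F hδ'
  refine iInf₂_le_of_le F hF (iInf₂_le_of_le δ hδ
    (limsup_le_limsup (Eventually.of_forall fun i => ?_)))
  exact pressureInf_term_mono α hf hρ.toIsContPseudoMetric hρ'.toIsContPseudoMetric hε hη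
    (hsub (σ i)) fun φ ψ => le_rhoInf_of_le_rhoInf hε himp

end CompactSpace

theorem stmt7_general {G : Type*} [Group G]
    {X : Type*} [TopologicalSpace X] [CompactSpace X]
    (α : G → X → X)
    (d : ℕ → ℕ) (σ : ∀ i, G → Equiv.Perm (Fin (d i)))
    (f : X → ℝ) (hf : Continuous f)
    (ρ ρ' : X → X → ℝ) (hρ : IsCompatMetric X ρ) (hρ' : IsCompatMetric X ρ') :
    PressureInf α f ρ d σ = PressureInf α f ρ' d σ :=
  (pressureInf_le α hf hρ hρ' d σ).antisymm (pressureInf_le α hf hρ' hρ d σ)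

theorem stmt7 {G : Type*} [Group G] [Countable G]
    {X : Type*} [TopologicalSpace X] [CompactSpace X] [TopologicalSpace.MetrizableSpace X]
    (α : G → X → X) (hα : ContAction G X α)
    (d : ℕ → ℕ) (σ : ∀ i, G → Equiv.Perm (Fin (d i))) (hσ : IsSoficApprox G d σ)
    (f : X → ℝ) (hf : Continuous f)
    (ρ ρ' : X → X → ℝ) (hρ : IsCompatMetric X ρ) (hρ' : IsCompatMetric X ρ') :
    PressureInf α f ρ d σ = PressureInf α f ρ' d σ :=
  stmt7_general α d σ f hf ρ ρ' hρ hρ'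

end Sofic
end
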